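/- arXiv:2102.05441 — 6 statements merged into one kernel-verified Lean document; each statement's English description precedes it below -/
import Mathlib

section
/- Let β > 0, σ² > 0, snr = 1/σ², and let ω : (0, snr] → ℝ be nonincreasing, continuous and nonnegative. Fix v₀ > 0 with ω(φ(v₀)) ≤ v₀, where φ(v) = 1/(β·v + σ²), and define v_0 = v₀, v_{t+1} = ω(φ(v_t)). If v̄ is the unique solution of v = ω(φ(v)) in [0, v₀], then v_t → v̄ as t → ∞. -/
/-- Convergence of state evolution to the unique fixed point: under the hypotheses of
monotone state evolution, if `v̄` is the unique solution of `v = ω(φ(v))` in `[0, v₀]`,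
then `v_t → v̄`. -/
theorem stmt_9 (β σ2 snr : ℝ) (hβ : 0 < β) (hσ : 0 < σ2) (hsnr : snr = 1 / σ2)
    (ω : ℝ → ℝ) (hanti : AntitoneOn ω (Set.Ioc 0 snr))
    (hcont : ContinuousOn ω (Set.Ioc 0 snr))
    (hnn : ∀ ρ ∈ Set.Ioc (0:ℝ) snr, 0 ≤ ω ρ)
    (v₀ : ℝ) (hv₀ : 0 < v₀) (hstart : ω (1 / (β * v₀ + σ2)) ≤ v₀)
    (v : ℕ → ℝ) (hv0 : v 0 = v₀)
    (hrec : ∀ t, v (t + 1) = ω (1 / (β * v t + σ2)))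
    (vbar : ℝ) (hmem : vbar ∈ Set.Icc 0 v₀)
    (hfix : vbar = ω (1 / (β * vbar + σ2)))
    (huniq : ∀ u ∈ Set.Icc (0:ℝ) v₀, u = ω (1 / (β * u + σ2)) → u = vbar) :
    Filter.Tendsto v Filter.atTop (nhds vbar) := by
  have hφmem : ∀ u : ℝ, 0 ≤ u → (1 / (β * u + σ2)) ∈ Set.Ioc 0 snr := by
    intro u hu
    have hpos : 0 < β * u + σ2 := by positivity
    constructor
    · positivity
    · rw [hsnr]
      apply one_div_le_one_div_of_le hσ
      nlinarith
  have hFmono : ∀ u w : ℝ, 0 ≤ u → u ≤ w →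
      ω (1 / (β * u + σ2)) ≤ ω (1 / (β * w + σ2)) := by
    intro u w hu huw
    have hw : 0 ≤ w := le_trans hu huw
    apply hanti (hφmem w hw) (hφmem u hu)
    apply one_div_le_one_div_of_le
    · positivity
    · nlinarith
  have key : ∀ t, (0 ≤ v t ∧ v t ≤ v₀) ∧ v (t + 1) ≤ v t := by
    intro t
    induction t with
    | zero =>
      refine ⟨⟨?_, ?_⟩, ?_⟩
      · rw [hv0]; exact hv₀.le
      · rw [hv0]
      · rw [hrec 0, hv0]; exact hstart
    | succ n ih =>
      obtain ⟨⟨h0, h1⟩, h2⟩ := ih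
      have hnn' : 0 ≤ v (n + 1) := by
        rw [hrec]
        exact hnn _ (hφmem _ h0)
      refine ⟨⟨hnn', le_trans h2 h1⟩, ?_⟩
      calc v (n + 2) = ω (1 / (β * v (n + 1) + σ2)) := hrec (n + 1)
        _ ≤ ω (1 / (β * v n + σ2)) := hFmono _ _ hnn' h2
        _ = v (n + 1) := (hrec n).symm
  have hant : Antitone v := antitone_nat_of_succ_le fun n => (key n).2
  have hbdd : BddBelow (Set.range v) := ⟨0, by rintro x ⟨t, rfl⟩; exact (key t).1.1⟩
  set L := ⨅ t, v t with hL
  have htend : Filter.Tendsto v Filter.atTop (nhds L) := tendsto_atTop_ciInf hant hbdd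
  have hL0 : 0 ≤ L := le_ciInf fun t => (key t).1.1
  have hLv₀ : L ≤ v₀ := le_trans (ciInf_le hbdd 0) (le_of_eq hv0)
  have hden : Filter.Tendsto (fun t => β * v t + σ2) Filter.atTop
      (nhds (β * L + σ2)) := by
    exact ((tendsto_const_nhds.mul htend).add tendsto_const_nhds)
  have hdne : β * L + σ2 ≠ 0 := by positivity
  have hφtend : Filter.Tendsto (fun t => 1 / (β * v t + σ2)) Filter.atTop
      (nhds (1 / (β * L + σ2))) := Filter.Tendsto.div tendsto_const_nhds hden hdne
  have hφtend' : Filter.Tendsto (fun t => 1 / (β * v t + σ2)) Filter.atTop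
      (nhdsWithin (1 / (β * L + σ2)) (Set.Ioc 0 snr)) := by
    apply tendsto_nhdsWithin_of_tendsto_nhds_of_eventually_within _ hφtend
    exact Filter.Eventually.of_forall fun t => hφmem _ (key t).1.1
  have hωtend : Filter.Tendsto (fun t => ω (1 / (β * v t + σ2))) Filter.atTop
      (nhds (ω (1 / (β * L + σ2)))) :=
    ((hcont _ (hφmem L hL0)).tendsto).comp hφtend'
  have htend' : Filter.Tendsto (fun t => v (t + 1)) Filter.atTop (nhds L) :=
    htend.comp (Filter.tendsto_add_atTop_nat 1)
  have heq : L = ω (1 / (β * L + σ2)) := by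
    apply tendsto_nhds_unique htend'
    simpa only [hrec] using hωtend
  have := huniq L ⟨hL0, hLv₀⟩ heq
  rwa [this] at htend
end

section
/- Let β > 0, σ² > 0, snr = 1/σ², and let ω : (0, snr] → ℝ be nonincreasing, continuous and nonnegative. Fix v₀ > 0 and suppose ω(φ(v)) < v for every v ∈ (0, v₀], where φ(v) = 1/(β·v + σ²). Then the state-evolution sequence defined by v_0 = v₀ and v_{t+1} = ω(φ(v_t)) converges to 0. -/
open Filter Set Topology

/-- Error-free state evolution: if the detection tunnel is open, i.e.
`ω(φ(v)) < v` for all `v ∈ (0, v₀]`, then the state-evolution sequence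
`v_{t+1} = ω(φ(v_t))`, `v_0 = v₀ > 0`, converges to `0`. -/
theorem stmt_10 (β σ2 snr : ℝ) (hβ : 0 < β) (hσ : 0 < σ2) (hsnr : snr = 1 / σ2)
    (ω : ℝ → ℝ) (hanti : AntitoneOn ω (Set.Ioc 0 snr))
    (hcont : ContinuousOn ω (Set.Ioc 0 snr))
    (hnn : ∀ ρ ∈ Set.Ioc (0:ℝ) snr, 0 ≤ ω ρ)
    (v₀ : ℝ) (hv₀ : 0 < v₀)
    (htunnel : ∀ u ∈ Set.Ioc (0:ℝ) v₀, ω (1 / (β * u + σ2)) < u)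
    (v : ℕ → ℝ) (hv0 : v 0 = v₀)
    (hrec : ∀ t, v (t + 1) = ω (1 / (β * v t + σ2))) :
    Filter.Tendsto v Filter.atTop (nhds 0) := by
  have hsnrpos : 0 < snr := by rw [hsnr]; positivity
  have hsnrmem : snr ∈ Set.Ioc (0:ℝ) snr := ⟨hsnrpos, le_refl _⟩
  -- φ maps (0,∞) into (0, snr)
  have hφmem : ∀ u : ℝ, 0 < u → 1 / (β * u + σ2) ∈ Set.Ioo (0:ℝ) snr := by
    intro u hu
    have hden : 0 < β * u + σ2 := by positivity
    refine ⟨by positivity, ?_⟩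
    rw [hsnr]
    apply one_div_lt_one_div_of_lt hσ
    nlinarith
  -- Step 1: ω snr = 0
  have hωsnr : ω snr = 0 := by
    refine le_antisymm ?_ (hnn snr hsnrmem)
    have hφcont : Filter.Tendsto (fun u : ℝ => 1 / (β * u + σ2)) (nhds 0) (nhds snr) := by
      have : ContinuousAt (fun u : ℝ => 1 / (β * u + σ2)) 0 := by
        apply ContinuousAt.div continuousAt_const (by fun_prop)
        simp [hσ.ne']
      simpa [hsnr] using this.tendsto
    have htend1 : Filter.Tendsto (fun u : ℝ => 1 / (β * u + σ2)) (nhdsWithin 0 (Set.Ioi 0))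
        (nhdsWithin snr (Set.Ioc 0 snr)) := by
      apply tendsto_nhdsWithin_of_tendsto_nhds_of_eventually_within
      · exact hφcont.mono_left nhdsWithin_le_nhds
      · filter_upwards [self_mem_nhdsWithin] with u hu
        exact Set.Ioo_subset_Ioc_self (hφmem u hu)
    have htend2 : Filter.Tendsto (fun u : ℝ => ω (1 / (β * u + σ2)))
        (nhdsWithin 0 (Set.Ioi 0)) (nhds (ω snr)) :=
      (hcont snr hsnrmem).tendsto.comp htend1
    have hle : ∀ᶠ u in nhdsWithin (0:ℝ) (Set.Ioi 0), ω (1 / (β * u + σ2)) ≤ u := by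
      filter_upwards [Ioc_mem_nhdsGT_of_mem ⟨le_refl (0:ℝ), hv₀⟩] with u hu
      exact (htunnel u hu).le
    have hidtend : Filter.Tendsto (fun u : ℝ => u) (nhdsWithin (0:ℝ) (Set.Ioi 0)) (nhds 0) :=
      tendsto_id.mono_left nhdsWithin_le_nhds
    exact le_of_tendsto_of_tendsto htend2 hidtend hle
  -- Step 2: bounds and monotonicity
  have hbounds : ∀ t, 0 ≤ v t ∧ v t ≤ v₀ := by
    intro t
    induction t with
    | zero => rw [hv0]; exact ⟨hv₀.le, le_refl _⟩
    | succ n ih =>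
      rcases eq_or_lt_of_le ih.1 with h0 | hpos
      · have : v (n+1) = 0 := by
          rw [hrec, ← h0]
          simpa [hsnr] using hωsnr
        rw [this]; exact ⟨le_refl _, hv₀.le⟩
      · have hmem := hφmem (v n) hpos
        constructor
        · rw [hrec]; exact hnn _ (Set.Ioo_subset_Ioc_self hmem)
        · rw [hrec]
          exact le_trans (htunnel (v n) ⟨hpos, ih.2⟩).le ih.2
  have hmono : ∀ t, v (t + 1) ≤ v t := by
    intro t
    rcases eq_or_lt_of_le (hbounds t).1 with h0 | hpos
    · rw [hrec, ← h0]
      simp only [mul_zero, zero_add]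
      rw [← hsnr, hωsnr]
    · rw [hrec]
      exact (htunnel (v t) ⟨hpos, (hbounds t).2⟩).le
  have hanti' : Antitone v := antitone_nat_of_succ_le hmono
  have hbdd : BddBelow (Set.range v) := ⟨0, by rintro _ ⟨t, rfl⟩; exact (hbounds t).1⟩
  set L := ⨅ t, v t with hL
  have htendL : Filter.Tendsto v Filter.atTop (nhds L) :=
    tendsto_atTop_ciInf hanti' hbdd
  have hLge : 0 ≤ L := le_ciInf fun t => (hbounds t).1
  rcases eq_or_lt_of_le hLge with h0 | hLpos
  · rwa [← h0] at htendL
  · exfalso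
    have hLle : ∀ t, L ≤ v t := fun t => ciInf_le hbdd t
    have hLv0 : L ≤ v₀ := by rw [← hv0]; exact hLle 0
    have hφL := hφmem L hLpos
    -- continuity of the iteration map at L
    have hωca : ContinuousAt ω (1 / (β * L + σ2)) := by
      apply hcont.continuousAt
      exact mem_of_superset (isOpen_Ioo.mem_nhds hφL) Set.Ioo_subset_Ioc_self
    have hφca : ContinuousAt (fun x : ℝ => 1 / (β * x + σ2)) L := by
      apply ContinuousAt.div continuousAt_const (by fun_prop)
      have : (0:ℝ) < β * L + σ2 := by positivity
      exact this.ne'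
    have hcomp : Filter.Tendsto (fun t => ω (1 / (β * v t + σ2))) Filter.atTop
        (nhds (ω (1 / (β * L + σ2)))) :=
      (hωca.tendsto.comp (hφca.tendsto.comp htendL))
    have hshift : Filter.Tendsto (fun t => v (t + 1)) Filter.atTop (nhds L) :=
      htendL.comp (tendsto_add_atTop_nat 1)
    have heq : ω (1 / (β * L + σ2)) = L := by
      apply tendsto_nhds_unique _ hshift
      simpa only [hrec] using hcomp.congr (fun t => (hrec t).symm) |>.congr
        (fun t => rfl)
    have := htunnel L ⟨hLpos, hLv0⟩
    rw [heq] at this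
    exact lt_irrefl L this
end

section
/- Let β > 0, σ² > 0, snr = 1/σ², and let ω : (0, snr] → ℝ be nonincreasing. Fix v₀ > 0 and define v_0 = v₀, v_{t+1} = ω(φ(v_t)) with φ(v) = 1/(β·v + σ²). If there exists u ∈ (0, v₀] with ω(φ(u)) ≥ u, then v_t ≥ u for all t ≥ 0; in particular the state-evolution sequence does not converge to 0. -/
/-- Necessity of the open-tunnel condition: if some `u ∈ (0, v₀]` satisfies
`ω(φ(u)) ≥ u`, then the state-evolution sequence stays `≥ u` forever and in
particular does not converge to `0`. -/
theorem stmt_11 (β σ2 snr : ℝ) (hβ : 0 < β) (hσ : 0 < σ2) (hsnr : snr = 1 / σ2)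
    (ω : ℝ → ℝ) (hanti : AntitoneOn ω (Set.Ioc 0 snr))
    (v₀ : ℝ) (hv₀ : 0 < v₀)
    (v : ℕ → ℝ) (hv0 : v 0 = v₀)
    (hrec : ∀ t, v (t + 1) = ω (1 / (β * v t + σ2)))
    (u : ℝ) (hu : u ∈ Set.Ioc (0:ℝ) v₀)
    (hfix : u ≤ ω (1 / (β * u + σ2))) :
    (∀ t, u ≤ v t) ∧ ¬ Filter.Tendsto v Filter.atTop (nhds 0) := by
  obtain ⟨hu0, huv⟩ := hu
  have hmem : ∀ w : ℝ, 0 < w → (1 / (β * w + σ2)) ∈ Set.Ioc (0:ℝ) snr := by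
    intro w hw
    have hden : σ2 ≤ β * w + σ2 := by nlinarith
    have hdenpos : 0 < β * w + σ2 := by nlinarith
    constructor
    · positivity
    · rw [hsnr]
      exact one_div_le_one_div_of_le hσ hden
  have hall : ∀ t, u ≤ v t := by
    intro t
    induction t with
    | zero => rw [hv0]; exact huv
    | succ n ih =>
      rw [hrec]
      have hvn : 0 < v n := lt_of_lt_of_le hu0 ih
      have h1 : (1 / (β * v n + σ2)) ≤ 1 / (β * u + σ2) := by
        apply one_div_le_one_div_of_le
        · nlinarith
        · nlinarith
      calc u ≤ ω (1 / (β * u + σ2)) := hfix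
        _ ≤ ω (1 / (β * v n + σ2)) := hanti (hmem _ hvn) (hmem _ hu0) h1
  refine ⟨hall, fun h => ?_⟩
  have : ∀ᶠ t in Filter.atTop, v t < u :=
    h (Iio_mem_nhds hu0)
  obtain ⟨t, ht⟩ := this.exists
  exact absurd (hall t) (not_le.mpr ht)
end

section
/- Let β > 0, σ² > 0, snr = 1/σ². Let ω_S : (0, ∞) → ℝ be nonnegative, nonincreasing, integrable on (0, snr), and strictly positive on (0, snr). Then for every ε > 0 there exists a function ω_C : (0, ∞) → ℝ that is nonnegative, nonincreasing, vanishes on [snr, ∞), satisfies the strict matching condition ω_C(ρ) < min(ω_S(ρ), (1/ρ − σ²)/β) for all ρ ∈ (0, snr), and satisfies ∫_0^∞ ω_C(ρ) dρ ≥ ∫_0^{snr} min(ω_S(ρ), (1/ρ − σ²)/β) dρ − ε. -/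
open MeasureTheory

/-- Achievability part of capacity optimality (Theorem 5): rates arbitrarily close to
the area of `ω_C* = min(ω_S, φ⁻¹)` are achievable by decoder transfer functions `ω_C`
satisfying the strict matching (open-tunnel) condition `ω_C < min(ω_S, φ⁻¹)` on
`(0, snr)` and vanishing on `[snr, ∞)`. -/
theorem stmt_15 (β σ2 snr : ℝ) (hβ : 0 < β) (hσ : 0 < σ2) (hsnr : snr = 1 / σ2)
    (ωS : ℝ → ℝ)
    (hSnn : ∀ ρ ∈ Set.Ioi (0:ℝ), 0 ≤ ωS ρ)
    (hSanti : AntitoneOn ωS (Set.Ioi 0))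
    (hSint : MeasureTheory.IntegrableOn ωS (Set.Ioo 0 snr))
    (hSpos : ∀ ρ ∈ Set.Ioo (0:ℝ) snr, 0 < ωS ρ) :
    ∀ ε : ℝ, 0 < ε →
      ∃ ωC : ℝ → ℝ,
        (∀ ρ ∈ Set.Ioi (0:ℝ), 0 ≤ ωC ρ) ∧
        AntitoneOn ωC (Set.Ioi 0) ∧
        (∀ ρ ∈ Set.Ici snr, ωC ρ = 0) ∧
        (∀ ρ ∈ Set.Ioo (0:ℝ) snr, ωC ρ < min (ωS ρ) ((1 / ρ - σ2) / β)) ∧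
        (∫ ρ in Set.Ioo (0:ℝ) snr, min (ωS ρ) ((1 / ρ - σ2) / β)) - ε ≤
          ∫ ρ in Set.Ioi (0:ℝ), ωC ρ := by
  intro ε hε
  have hsnrpos : 0 < snr := by rw [hsnr]; positivity
  set f : ℝ → ℝ := fun ρ => (1 / ρ - σ2) / β with hf
  set m : ℝ → ℝ := fun ρ => min (ωS ρ) (f ρ) with hm
  -- f is positive on (0, snr)
  have hfpos : ∀ ρ ∈ Set.Ioo (0:ℝ) snr, 0 < f ρ := by
    intro ρ hρ
    have h1 : σ2 < 1 / ρ := by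
      rw [lt_div_iff₀ hρ.1]
      have := hρ.2
      rw [hsnr, lt_div_iff₀ hσ] at this
      linarith
    have : 0 < 1 / ρ - σ2 := by linarith
    positivity
  have hmpos : ∀ ρ ∈ Set.Ioo (0:ℝ) snr, 0 < m ρ :=
    fun ρ hρ => lt_min (hSpos ρ hρ) (hfpos ρ hρ)
  have hmnn : ∀ ρ ∈ Set.Ioo (0:ℝ) snr, 0 ≤ m ρ := fun ρ hρ => (hmpos ρ hρ).le
  -- m is antitone on (0, ∞)
  have hfanti : AntitoneOn f (Set.Ioi 0) := by
    intro a ha b hb hab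
    have : 1 / b ≤ 1 / a := one_div_le_one_div_of_le ha hab
    have : (1 / b - σ2) / β ≤ (1 / a - σ2) / β := by
      apply div_le_div_of_nonneg_right ?_ hβ.le
      linarith
    simpa [hf] using this
  have hmanti : AntitoneOn m (Set.Ioi 0) := by
    intro a ha b hb hab
    exact min_le_min (hSanti ha hb hab) (hfanti ha hb hab)
  -- m is integrable on (0, snr)
  have hmeas : AEMeasurable m ((volume : Measure ℝ).restrict (Set.Ioo 0 snr)) := by
    have h1 : AEMeasurable ωS ((volume : Measure ℝ).restrict (Set.Ioo 0 snr)) :=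
      aemeasurable_restrict_of_antitoneOn measurableSet_Ioo
        (hSanti.mono Set.Ioo_subset_Ioi_self)
    have h2 : Measurable f := by
      apply Measurable.div_const
      exact (measurable_const.div measurable_id).sub measurable_const
    exact h1.min h2.aemeasurable
  have hmint : MeasureTheory.IntegrableOn m (Set.Ioo 0 snr) := by
    apply Integrable.mono' hSint hmeas.aestronglyMeasurable
    filter_upwards [ae_restrict_mem measurableSet_Ioo] with ρ hρ
    rw [Real.norm_eq_abs, abs_of_nonneg (hmnn ρ hρ)]
    exact min_le_left _ _
  set I : ℝ := ∫ ρ in Set.Ioo (0:ℝ) snr, m ρ with hI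
  have hInn : 0 ≤ I :=
    setIntegral_nonneg measurableSet_Ioo hmnn
  set δ : ℝ := ε / (I + ε) with hδ
  have hIεpos : 0 < I + ε := by linarith
  have hδpos : 0 < δ := by positivity
  have hδle : δ ≤ 1 := by
    rw [hδ, div_le_one hIεpos]; linarith
  have hδI : δ * I ≤ ε := by
    have h1 : δ * (I + ε) = ε := div_mul_cancel₀ ε hIεpos.ne'
    nlinarith
  refine ⟨(Set.Ioo (0:ℝ) snr).indicator (fun ρ => (1 - δ) * m ρ), ?_, ?_, ?_, ?_, ?_⟩
  · intro ρ _
    apply Set.indicator_nonneg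
    intro x hx
    have := hmnn x hx
    nlinarith
  · intro a ha b hb hab
    by_cases hbmem : b ∈ Set.Ioo (0:ℝ) snr
    · have hamem : a ∈ Set.Ioo (0:ℝ) snr := ⟨ha, lt_of_le_of_lt hab hbmem.2⟩
      rw [Set.indicator_of_mem hbmem, Set.indicator_of_mem hamem]
      have := hmanti ha hb hab
      nlinarith
    · rw [Set.indicator_of_notMem hbmem]
      apply Set.indicator_nonneg
      intro x hx
      have := hmnn x hx
      nlinarith
  · intro ρ hρ
    apply Set.indicator_of_notMem
    intro hmem
    exact absurd hρ (not_le.mpr hmem.2)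
  · intro ρ hρ
    rw [Set.indicator_of_mem hρ]
    have := hmpos ρ hρ
    nlinarith
  · have heq : (∫ ρ in Set.Ioi (0:ℝ),
        (Set.Ioo (0:ℝ) snr).indicator (fun ρ => (1 - δ) * m ρ) ρ)
        = ∫ ρ in Set.Ioo (0:ℝ) snr, (1 - δ) * m ρ := by
      rw [setIntegral_indicator measurableSet_Ioo,
        Set.inter_eq_self_of_subset_right Set.Ioo_subset_Ioi_self]
    rw [heq, integral_const_mul]
    have : (∫ ρ in Set.Ioo (0:ℝ) snr, min (ωS ρ) ((1 / ρ - σ2) / β)) = I := rfl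
    rw [this]
    nlinarith
end

section
/- Let β > 0, σ² > 0, snr = 1/σ², and let ρ* be the unique positive solution of 1/(1 + ρ) = (1/ρ − σ²)/β. Then ∫_0^{snr} min(1/(1 + ρ), (1/ρ − σ²)/β) dρ = log(1 + ρ*) + (1/β)·(ρ*/snr − log(ρ*/snr) − 1). -/
open MeasureTheory Real

/-! Clearing denominators, `(1/ρ - σ²)/β - 1/(1+ρ)` is, for `ρ > 0`, a positive multiple of
`ρ* - ρ`: the quadratic it reduces to has the roots `ρ*` and `-1/(σ²ρ*)`. Hence the minimum is
the MMSE curve `1/(1+ρ)` on `(0, ρ*]` and the linear-detector curve on `[ρ*, snr]`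
(`ρ* ≤ snr` because the latter vanishes at `snr = 1/σ²`), and both pieces integrate in closed
form: `log (1 + ρ*)` and `(log (snr/ρ*) - σ² (snr - ρ*))/β`. -/

open Set intervalIntegral Interval in
theorem intervalIntegral.integral_min_of_crossing {f g : ℝ → ℝ} {a b c : ℝ}
    (hac : a ≤ c) (hcb : c ≤ b)
    (hf : IntervalIntegrable f volume a c) (hg : IntervalIntegrable g volume c b)
    (hfg : ∀ x ∈ Ioc a c, f x ≤ g x) (hgf : ∀ x ∈ Ioc c b, g x ≤ f x) :
    ∫ x in a..b, min (f x) (g x) = (∫ x in a..c, f x) + ∫ x in c..b, g x := by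
  have hleft : EqOn (fun x => min (f x) (g x)) f (Ι a c) := by
    rw [uIoc_of_le hac]; exact fun x hx => min_eq_left (hfg x hx)
  have hright : EqOn (fun x => min (f x) (g x)) g (Ι c b) := by
    rw [uIoc_of_le hcb]; exact fun x hx => min_eq_right (hgf x hx)
  rw [← integral_add_adjacent_intervals ((intervalIntegrable_congr hleft).mpr hf)
      ((intervalIntegrable_congr hright).mpr hg),
    integral_congr_ae (.of_forall hleft), integral_congr_ae (.of_forall hright)]

section Integrals

open scoped Interval

variable {a b r : ℝ}

theorem intervalIntegrable_one_div_one_add (hr : -1 < r) :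
    IntervalIntegrable (fun x => 1 / (1 + x)) volume 0 r := by
  refine intervalIntegral.intervalIntegrable_one_div (fun x hx => ?_) (by fun_prop)
  have : -1 < x := (lt_min (by norm_num) hr).trans_le hx.1
  linarith

theorem integral_one_div_one_add (hr : -1 < r) :
    ∫ x in (0 : ℝ)..r, 1 / (1 + x) = log (1 + r) := by
  rw [intervalIntegral.integral_comp_add_left (fun x => 1 / x) 1,
    integral_one_div (Set.notMem_uIcc_of_lt (by norm_num) (by linarith)), add_zero, div_one]

theorem intervalIntegrable_one_div_sub_div (σ2 β : ℝ) (h0 : (0 : ℝ) ∉ [[a, b]]) :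
    IntervalIntegrable (fun x => (1 / x - σ2) / β) volume a b :=
  ((intervalIntegral.intervalIntegrable_one_div (fun _ hx => ne_of_mem_of_not_mem hx h0)
    continuousOn_id).sub intervalIntegrable_const).div_const β

theorem integral_one_div_sub_div (σ2 β : ℝ) (h0 : (0 : ℝ) ∉ [[a, b]]) :
    ∫ x in a..b, (1 / x - σ2) / β = (log (b / a) - σ2 * (b - a)) / β := by
  have hinv : IntervalIntegrable (fun x => 1 / x) volume a b :=
    intervalIntegral.intervalIntegrable_one_div (fun _ hx => ne_of_mem_of_not_mem hx h0)
      continuousOn_id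
  rw [intervalIntegral.integral_div, intervalIntegral.integral_sub hinv intervalIntegrable_const,
    integral_one_div h0, intervalIntegral.integral_const, smul_eq_mul, mul_comm]

end Integrals

section Crossing

variable {β σ2 ρs ρ : ℝ}

theorem div_sub_one_div_one_add_eq_of_fixedPoint (hβ : β ≠ 0) (hρs : 0 < ρs)
    (hfix : 1 / (1 + ρs) = (1 / ρs - σ2) / β) (hρ : 0 < ρ) :
    (1 / ρ - σ2) / β - 1 / (1 + ρ) = (ρs - ρ) * ((σ2 * ρ + 1 / ρs) / (β * ρ * (1 + ρ))) := by
  have h1 : 1 + ρs ≠ 0 := by positivity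
  have h2 : 1 + ρ ≠ 0 := by positivity
  field_simp at hfix ⊢
  linear_combination (-ρ) * hfix

theorem one_div_one_add_le_iff_le_fixedPoint (hβ : 0 < β) (hσ : 0 ≤ σ2) (hρs : 0 < ρs)
    (hfix : 1 / (1 + ρs) = (1 / ρs - σ2) / β) (hρ : 0 < ρ) :
    1 / (1 + ρ) ≤ (1 / ρ - σ2) / β ↔ ρ ≤ ρs := by
  rw [← sub_nonneg, div_sub_one_div_one_add_eq_of_fixedPoint hβ.ne' hρs hfix hρ,
    mul_nonneg_iff_of_pos_right (by positivity), sub_nonneg]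

theorem div_le_one_div_one_add_iff_fixedPoint_le (hβ : 0 < β) (hσ : 0 ≤ σ2) (hρs : 0 < ρs)
    (hfix : 1 / (1 + ρs) = (1 / ρs - σ2) / β) (hρ : 0 < ρ) :
    (1 / ρ - σ2) / β ≤ 1 / (1 + ρ) ↔ ρs ≤ ρ := by
  rw [← sub_nonpos, div_sub_one_div_one_add_eq_of_fixedPoint hβ.ne' hρs hfix hρ, ← neg_nonneg,
    ← neg_mul, neg_sub, mul_nonneg_iff_of_pos_right (by positivity), sub_nonneg]

end Crossing

theorem stmt_16_general (β σ2 snr : ℝ) (hβ : 0 < β) (hσ : 0 < σ2) (hsnr : snr = 1 / σ2)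
    (ρs : ℝ) (hρs : 0 < ρs) (hfix : 1 / (1 + ρs) = (1 / ρs - σ2) / β) :
    ∫ ρ in (0:ℝ)..snr, min (1 / (1 + ρ)) ((1 / ρ - σ2) / β) =
      Real.log (1 + ρs) + (1 / β) * (ρs / snr - Real.log (ρs / snr) - 1) := by
  have hsnr_pos : 0 < snr := hsnr ▸ by positivity
  have hσ_eq : σ2 = 1 / snr := by rw [hsnr, one_div_one_div]
  have hρs_le : ρs ≤ snr :=
    (div_le_one_div_one_add_iff_fixedPoint_le hβ hσ.le hρs hfix hsnr_pos).mp <| by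
      rw [← hσ_eq, sub_self, zero_div]; positivity
  have h0 : (0 : ℝ) ∉ Set.uIcc ρs snr := Set.notMem_uIcc_of_lt hρs hsnr_pos
  rw [intervalIntegral.integral_min_of_crossing hρs.le hρs_le
      (intervalIntegrable_one_div_one_add (by linarith))
      (intervalIntegrable_one_div_sub_div σ2 β h0)
      (fun ρ hρ => (one_div_one_add_le_iff_le_fixedPoint hβ hσ.le hρs hfix hρ.1).mpr hρ.2)
      (fun ρ hρ => (div_le_one_div_one_add_iff_fixedPoint_le hβ hσ.le hρs hfix
        (hρs.trans hρ.1)).mpr hρ.1.le),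
    integral_one_div_one_add (by linarith), integral_one_div_sub_div σ2 β h0, ← inv_div ρs, log_inv,
    hσ_eq]
  field_simp
  ring

/-- Area formula for Gaussian signaling (Proposition 1 instantiated): if `ρ*` is the
unique positive solution of `1/(1+ρ) = (1/ρ − σ²)/β`, then the area of
`min(1/(1+ρ), (1/ρ − σ²)/β)` on `(0, snr)` equals
`log(1+ρ*) + (1/β)·(ρ*/snr − log(ρ*/snr) − 1)`. -/
theorem stmt_16 (β σ2 snr : ℝ) (hβ : 0 < β) (hσ : 0 < σ2) (hsnr : snr = 1 / σ2)
    (ρs : ℝ) (hρs : 0 < ρs) (hfix : 1 / (1 + ρs) = (1 / ρs - σ2) / β)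
    (huniq : ∀ ρ : ℝ, 0 < ρ → 1 / (1 + ρ) = (1 / ρ - σ2) / β → ρ = ρs) :
    ∫ ρ in (0:ℝ)..snr, min (1 / (1 + ρ)) ((1 / ρ - σ2) / β) =
      Real.log (1 + ρs) + (1 / β) * (ρs / snr - Real.log (ρs / snr) - 1) :=
  stmt_16_general β σ2 snr hβ hσ hsnr ρs hρs hfix
end

section
/- Let β > 0, σ² > 0, snr = 1/σ². Let ρ* ∈ (0, snr] and let ω : (0, ∞) → ℝ be nonnegative and integrable on (0, ρ*), with ω(ρ) ≤ (1/ρ − σ²)/β for ρ ∈ (0, ρ*] and (1/ρ − σ²)/β ≤ ω(ρ) for ρ ∈ [ρ*, snr]. Then ∫_0^{snr} min(ω(ρ), (1/ρ − σ²)/β) dρ − ∫_0^{ρ*} ω(ρ) dρ = (1/β)·(ρ*/snr − log(ρ*/snr) − 1) ≥ 0, with equality if and only if ρ* = snr. -/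
open MeasureTheory Real

/-- Rate loss of the cascading AMP-DEC scheme (Section III-D): the gap between the
maximum achievable rate of iterative AMP, `∫₀^{snr} min(ω, φ⁻¹)`, and the AMP-DEC
rate `∫₀^{ρ*} ω` equals `(1/β)·(ρ*/snr − log(ρ*/snr) − 1) ≥ 0`, with equality iff
`ρ* = snr`. -/
theorem stmt_17 (β σ2 snr : ℝ) (hβ : 0 < β) (hσ : 0 < σ2) (hsnr : snr = 1 / σ2)
    (ρs : ℝ) (hρs : ρs ∈ Set.Ioc 0 snr) (ω : ℝ → ℝ)
    (hnn : ∀ ρ ∈ Set.Ioi (0:ℝ), 0 ≤ ω ρ)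
    (hint : MeasureTheory.IntegrableOn ω (Set.Ioo 0 ρs))
    (hle : ∀ ρ ∈ Set.Ioc (0:ℝ) ρs, ω ρ ≤ (1 / ρ - σ2) / β)
    (hge : ∀ ρ ∈ Set.Icc ρs snr, (1 / ρ - σ2) / β ≤ ω ρ) :
    (∫ ρ in (0:ℝ)..snr, min (ω ρ) ((1 / ρ - σ2) / β)) - (∫ ρ in (0:ℝ)..ρs, ω ρ) =
        (1 / β) * (ρs / snr - Real.log (ρs / snr) - 1) ∧
      0 ≤ (1 / β) * (ρs / snr - Real.log (ρs / snr) - 1) ∧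
      ((1 / β) * (ρs / snr - Real.log (ρs / snr) - 1) = 0 ↔ ρs = snr) := by
  obtain ⟨hρ0, hρle⟩ := hρs
  have hsnr0 : 0 < snr := lt_of_lt_of_le hρ0 hρle
  -- ω integrable on Ioc 0 ρs
  have hintIoc : MeasureTheory.IntegrableOn ω (Set.Ioc 0 ρs) := by
    rwa [integrableOn_Ioc_iff_integrableOn_Ioo]
  -- min = ω on Ioc 0 ρs
  have heq1 : ∀ ρ ∈ Set.Ioc (0:ℝ) ρs, min (ω ρ) ((1 / ρ - σ2) / β) = ω ρ := by
    intro ρ hρ; exact min_eq_left (hle ρ hρ)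
  -- min = f on Ioc ρs snr
  have heq2 : ∀ ρ ∈ Set.Ioc ρs snr, min (ω ρ) ((1 / ρ - σ2) / β) = (1 / ρ - σ2) / β := by
    intro ρ hρ; exact min_eq_right (hge ρ ⟨le_of_lt hρ.1, hρ.2⟩)
  -- integrability of min on [0, ρs]
  have hI1 : IntervalIntegrable (fun ρ => min (ω ρ) ((1 / ρ - σ2) / β)) volume 0 ρs := by
    rw [intervalIntegrable_iff_integrableOn_Ioc_of_le (le_of_lt hρ0)]
    exact hintIoc.congr_fun (fun ρ hρ => (heq1 ρ hρ).symm) measurableSet_Ioc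
  -- continuity of f on [ρs, snr]
  have hcont : ContinuousOn (fun ρ : ℝ => (1 / ρ - σ2) / β) (Set.uIcc ρs snr) := by
    apply ContinuousOn.div_const
    apply ContinuousOn.sub _ continuousOn_const
    apply ContinuousOn.div continuousOn_const continuousOn_id
    intro x hx
    rw [Set.uIcc_of_le hρle] at hx
    exact ne_of_gt (lt_of_lt_of_le hρ0 hx.1)
  have hIf : IntervalIntegrable (fun ρ : ℝ => (1 / ρ - σ2) / β) volume ρs snr :=
    hcont.intervalIntegrable
  -- integrability of min on [ρs, snr]
  have hI2 : IntervalIntegrable (fun ρ => min (ω ρ) ((1 / ρ - σ2) / β)) volume ρs snr := by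
    rw [intervalIntegrable_iff_integrableOn_Ioc_of_le hρle] at hIf ⊢
    exact hIf.congr_fun (fun ρ hρ => (heq2 ρ hρ).symm) measurableSet_Ioc
  -- split the integral
  have hsplit : (∫ ρ in (0:ℝ)..snr, min (ω ρ) ((1 / ρ - σ2) / β)) =
      (∫ ρ in (0:ℝ)..ρs, min (ω ρ) ((1 / ρ - σ2) / β)) +
      (∫ ρ in ρs..snr, min (ω ρ) ((1 / ρ - σ2) / β)) :=
    (intervalIntegral.integral_add_adjacent_intervals hI1 hI2).symm
  have h1 : (∫ ρ in (0:ℝ)..ρs, min (ω ρ) ((1 / ρ - σ2) / β)) = ∫ ρ in (0:ℝ)..ρs, ω ρ := by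
    rw [intervalIntegral.integral_of_le (le_of_lt hρ0),
        intervalIntegral.integral_of_le (le_of_lt hρ0)]
    exact MeasureTheory.setIntegral_congr_fun measurableSet_Ioc heq1
  have h2 : (∫ ρ in ρs..snr, min (ω ρ) ((1 / ρ - σ2) / β)) =
      ∫ ρ in ρs..snr, (1 / ρ - σ2) / β := by
    rw [intervalIntegral.integral_of_le hρle, intervalIntegral.integral_of_le hρle]
    exact MeasureTheory.setIntegral_congr_fun measurableSet_Ioc heq2
  -- compute the integral of f
  have h0not : (0:ℝ) ∉ Set.uIcc ρs snr := by
    rw [Set.uIcc_of_le hρle]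
    intro h; exact absurd h.1 (not_le.mpr hρ0)
  have hone : IntervalIntegrable (fun ρ : ℝ => 1 / ρ) volume ρs snr := by
    apply ContinuousOn.intervalIntegrable
    apply ContinuousOn.div continuousOn_const continuousOn_id
    intro x hx
    rw [Set.uIcc_of_le hρle] at hx
    exact ne_of_gt (lt_of_lt_of_le hρ0 hx.1)
  have hval : (∫ ρ in ρs..snr, (1 / ρ - σ2) / β) =
      (Real.log (snr / ρs) - (snr - ρs) * σ2) / β := by
    rw [intervalIntegral.integral_div]
    congr 1
    rw [intervalIntegral.integral_sub hone (intervalIntegrable_const),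
        integral_one_div h0not, intervalIntegral.integral_const, smul_eq_mul]
  -- algebra: express in terms of x = ρs/snr
  have hsnrσ : snr * σ2 = 1 := by rw [hsnr]; field_simp
  have hxeq : ρs / snr = ρs * σ2 := by rw [hsnr]; field_simp
  have hlogeq : Real.log (snr / ρs) = - Real.log (ρs / snr) := by
    rw [← Real.log_inv]; congr 1
    field_simp
  have hmain : (∫ ρ in (0:ℝ)..snr, min (ω ρ) ((1 / ρ - σ2) / β)) -
      (∫ ρ in (0:ℝ)..ρs, ω ρ) = (1 / β) * (ρs / snr - Real.log (ρs / snr) - 1) := by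
    rw [hsplit, h1, h2, hval, hlogeq, hxeq]
    have : (snr - ρs) * σ2 = 1 - ρs * σ2 := by
      rw [sub_mul, hsnrσ]
    rw [this]; ring
  refine ⟨hmain, ?_, ?_⟩
  · have hx0 : 0 < ρs / snr := div_pos hρ0 hsnr0
    have := Real.log_le_sub_one_of_pos hx0
    have hβ' : 0 ≤ 1 / β := le_of_lt (by positivity)
    apply mul_nonneg hβ'
    linarith
  · constructor
    · intro h
      by_contra hne
      have hx0 : 0 < ρs / snr := div_pos hρ0 hsnr0
      have hx1 : ρs / snr ≠ 1 := by
        intro h1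
        exact hne ((div_eq_one_iff_eq (ne_of_gt hsnr0)).mp h1)
      have hlt := Real.log_lt_sub_one_of_pos hx0 hx1
      have hβ' : 0 < 1 / β := by positivity
      have : 0 < (1 / β) * (ρs / snr - Real.log (ρs / snr) - 1) := by
        apply mul_pos hβ'; linarith
      linarith
    · intro h
      rw [h, div_self (ne_of_gt hsnr0), Real.log_one]
      ring
end
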